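/- arXiv:1807.06266 — 4 statements merged into one kernel-verified Lean document; each statement's English description precedes it below -/
import Mathlib

section
/- Two-stage equivalence, part (a): Under the stated assumptions, the optimal value of the generalized moment problem equals the optimal value of the two-stage stochastic program, i.e. ρ₁₂ = ρ. -/
/-!
A feasible pair `(μ1, μ2)` of the moment problem is at least as expensive as the two-stage
objective averaged over `μ1`: pointwise `f2 ≥ v*` on `K2`, and since the `(x1, y)`-marginal of
`μ2` is `μ1 ⊗ φ`, Fubini turns `∫ v* dμ2` into `∫ (∫ v*(x1, y) dφ) dμ1`. Hence `ρ ≤ ρ₁₂`.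
Conversely, for `x1 ∈ K1` and `ε > 0`, a measurable `ε`-optimal second-stage decision `y ↦ x2(y)`
gives the feasible pair `(δ_{x1}, (y ↦ (x1, x2(y), y))_# φ)`, whose cost is within `ε` of the
two-stage objective at `x1`; so `ρ₁₂ ≤ ρ`. Such a decision exists because the second-stage
feasible sets form a closed relation with compact range, which admits measurable selections.
-/

open MeasureTheory MvPolynomial Filter Topology Set Metric

theorem csInf_eq_csInf_of_forall_exists_le_add {A B : Set ℝ} (hBne : B.Nonempty)
    (hAB : ∀ a ∈ A, sInf B ≤ a) (hBA : ∀ b ∈ B, ∀ ε > 0, ∃ a ∈ A, a ≤ b + ε) :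
    sInf A = sInf B := by
  obtain ⟨b, hb⟩ := hBne
  obtain ⟨a, ha, -⟩ := hBA b hb 1 one_pos
  refine le_antisymm (le_csInf ⟨b, hb⟩ fun b hb => le_of_forall_pos_le_add fun ε hε => ?_)
    (le_csInf ⟨a, ha⟩ hAB)
  obtain ⟨a, ha, hab⟩ := hBA b hb ε hε
  exact (csInf_le ⟨sInf B, hAB⟩ ha).trans hab

section MeasurableSelection

variable {α β : Type*}

theorem isClosed_image_fst_of_snd_mem [TopologicalSpace α] [TopologicalSpace β] {Q : Set β}
    (hQ : IsCompact Q) {C : Set (α × β)} (hC : IsClosed C) (hCQ : ∀ z ∈ C, z.2 ∈ Q) :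
    IsClosed (Prod.fst '' C) := by
  have : CompactSpace Q := isCompact_iff_compactSpace.mp hQ
  have hS : IsClosed {z : α × Q | (z.1, (z.2 : β)) ∈ C} :=
    hC.preimage (continuous_fst.prodMk (continuous_subtype_val.comp continuous_snd))
  convert isClosedMap_fst_of_compactSpace _ hS using 1
  ext y
  constructor
  · rintro ⟨z, hz, rfl⟩
    exact ⟨(z.1, ⟨z.2, hCQ z hz⟩), hz, rfl⟩
  · rintro ⟨z, hz, rfl⟩
    exact ⟨_, hz, rfl⟩

theorem isClosed_setOf_exists_mem_of_snd_mem [TopologicalSpace α] [TopologicalSpace β]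
    {Q : Set β} (hQ : IsCompact Q) {C : Set (α × β)} (hC : IsClosed C) (hCQ : ∀ z ∈ C, z.2 ∈ Q)
    {S : Set β} (hS : IsClosed S) : IsClosed {y | ∃ x ∈ S, (y, x) ∈ C} := by
  convert isClosed_image_fst_of_snd_mem hQ (hC.inter (hS.preimage continuous_snd))
    (fun z hz => hCQ z hz.1) using 1
  ext y
  constructor
  · rintro ⟨x, hxS, hx⟩
    exact ⟨(y, x), ⟨hx, hxS⟩, rfl⟩
  · rintro ⟨z, ⟨hz, hzS⟩, rfl⟩
    exact ⟨z.2, hzS, hz⟩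

theorem Measurable.apply_of_countable [MeasurableSpace α] [MeasurableSpace β] {ι : Type*}
    [Countable ι] [MeasurableSpace ι] [MeasurableSingletonClass ι] {i : α → ι} (hi : Measurable i)
    {f : ι → α → β} (hf : ∀ j, Measurable (f j)) : Measurable fun y => f (i y) y :=
  (measurable_from_prod_countable_left (f := fun p : α × ι => f p.2 p.1) hf).comp
    (measurable_id.prodMk hi)

open Classical in
/-- The least `k` with `P k y`, and `0` if there is none. -/
noncomputable def firstIndex (P : ℕ → α → Prop) (y : α) : ℕ :=
  Nat.find (p := fun k => P k y ∨ ∀ j, ¬P j y) (by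
    by_cases h : ∃ k, P k y
    · exact h.imp fun _ => Or.inl
    · exact ⟨0, Or.inr (not_exists.mp h)⟩)

theorem firstIndex_spec {P : ℕ → α → Prop} {y : α} (h : ∃ k, P k y) : P (firstIndex P y) y := by
  classical
  obtain ⟨k, hk⟩ := h
  exact (Nat.find_spec (p := fun k => P k y ∨ ∀ j, ¬P j y) _).resolve_right fun h' => h' k hk

theorem firstIndex_eq_zero {P : ℕ → α → Prop} {y : α} (h : ∀ k, ¬P k y) : firstIndex P y = 0 := by
  classical
  exact (Nat.find_eq_zero _).mpr (Or.inr h)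

theorem measurable_firstIndex [MeasurableSpace α] {P : ℕ → α → Prop}
    (hP : ∀ k, MeasurableSet {y | P k y}) : Measurable (firstIndex P) := by
  classical
  refine measurable_find _ fun k => ?_
  simp only [ofPred_or, ofPred_forall]
  exact (hP k).union (MeasurableSet.iInter fun j => (hP j).compl)

variable [TopologicalSpace α] [MeasurableSpace α] [OpensMeasurableSpace α] [MetricSpace β]
  {Q : Set β} {C : Set (α × β)}

-- Always taking the first admissible index of the dense sequence keeps each `F m` measurable.
theorem exists_measurable_index_seq {a : ℕ → β} (ha : DenseRange a) (hQ : IsCompact Q)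
    (hC : IsClosed C) (hCQ : ∀ z ∈ C, z.2 ∈ Q) :
    ∃ F : ℕ → α → ℕ, (∀ m, Measurable (F m)) ∧
      (∀ y x, (y, x) ∈ C → ∀ m, ∃ x' ∈ closedBall (a (F m y)) ((1 / 2) ^ m) ∩
        closedBall (a (F (m + 1) y)) ((1 / 2) ^ (m + 1)), (y, x') ∈ C) ∧
      ∀ y, (∀ x, (y, x) ∉ C) → ∀ m, F m y = 0 := by
  set r : ℕ → ℝ := fun m => (1 / 2) ^ m
  have hdense : ∀ x m, ∃ k, x ∈ closedBall (a k) (r m) := fun x m =>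
    (denseRange_iff.mp ha x (r m) (by positivity)).imp fun _ hk => hk.le
  have hmeas : ∀ S, IsClosed S → MeasurableSet {y | ∃ x ∈ S, (y, x) ∈ C} := fun S hS =>
    (isClosed_setOf_exists_mem_of_snd_mem hQ hC hCQ hS).measurableSet
  set first : ℕ → α → Prop := fun k y => ∃ x ∈ closedBall (a k) (r 0), (y, x) ∈ C
  set step : ℕ → ℕ → ℕ → α → Prop := fun m j k y =>
    ∃ x ∈ closedBall (a j) (r m) ∩ closedBall (a k) (r (m + 1)), (y, x) ∈ C
  obtain ⟨F, hF0, hFs⟩ : ∃ F : ℕ → α → ℕ,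
      F 0 = firstIndex first ∧ ∀ m y, F (m + 1) y = firstIndex (step m (F m y)) y :=
    ⟨fun m => Nat.rec (firstIndex first) (fun m Fm y => firstIndex (step m (Fm y)) y) m,
      rfl, fun _ _ => rfl⟩
  have hstep : ∀ m y, (∃ x ∈ closedBall (a (F m y)) (r m), (y, x) ∈ C) →
      step m (F m y) (F (m + 1) y) y := by
    rintro m y ⟨x, hxm, hx⟩
    obtain ⟨k, hk⟩ := hdense x (m + 1)
    exact hFs m y ▸ firstIndex_spec ⟨k, x, ⟨hxm, hk⟩, hx⟩
  refine ⟨F, fun m => ?_, fun y x hx m => hstep m y ?_, fun y hy m => ?_⟩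
  · induction m with
    | zero => exact hF0 ▸ measurable_firstIndex fun k => hmeas _ isClosed_closedBall
    | succ m ih =>
      have hstep_meas : ∀ j k, MeasurableSet {y | step m j k y} := fun j k =>
        hmeas _ (isClosed_closedBall.inter isClosed_closedBall)
      rw [funext (hFs m)]
      exact ih.apply_of_countable fun j => measurable_firstIndex (hstep_meas j)
  · induction m with
    | zero =>
      obtain ⟨k, hk⟩ := hdense x 0
      exact hF0 ▸ firstIndex_spec (P := first) ⟨k, x, hk, hx⟩
    | succ m ih =>
      obtain ⟨x', hx', hx'C⟩ := hstep m y ih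
      exact ⟨x', hx'.2, hx'C⟩
  · cases m with
    | zero => exact hF0 ▸ firstIndex_eq_zero fun k ⟨x, _, hx⟩ => hy x hx
    | succ m => exact hFs m y ▸ firstIndex_eq_zero fun k ⟨x, _, hx⟩ => hy x hx

variable [TopologicalSpace.SeparableSpace β] [Nonempty β] [CompleteSpace β] [MeasurableSpace β]
  [BorelSpace β]

-- The compact-range case of the Kuratowski–Ryll-Nardzewski selection theorem.
theorem exists_measurable_selection
    (hQ : IsCompact Q) (hC : IsClosed C) (hCQ : ∀ z ∈ C, z.2 ∈ Q) :
    ∃ σ : α → β, Measurable σ ∧ ∀ y x, (y, x) ∈ C → (y, σ y) ∈ C := by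
  set a := TopologicalSpace.denseSeq β
  obtain ⟨F, hF, hball, hzero⟩ :=
    exists_measurable_index_seq (TopologicalSpace.denseRange_denseSeq β) hQ hC hCQ
  have hdist : ∀ y m, dist (a (F m y)) (a (F (m + 1) y)) ≤ 2 * (1 / 2) ^ m := by
    intro y m
    by_cases hy : ∃ x, (y, x) ∈ C
    · obtain ⟨x, hx⟩ := hy
      obtain ⟨x', ⟨hx'0, hx'1⟩, -⟩ := hball y x hx m
      calc dist (a (F m y)) (a (F (m + 1) y))
          ≤ dist x' (a (F m y)) + dist x' (a (F (m + 1) y)) := dist_triangle_left _ _ _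
        _ ≤ (1 / 2) ^ m + (1 / 2) ^ (m + 1) := add_le_add hx'0 hx'1
        _ ≤ 2 * (1 / 2) ^ m := by rw [pow_succ]; linarith [pow_pos (one_half_pos (α := ℝ)) m]
    · simp only [hzero y (fun x hx => hy ⟨x, hx⟩), dist_self]
      positivity
  choose σ hσ using fun y =>
    cauchySeq_tendsto_of_complete (cauchySeq_of_le_geometric (1 / 2) 2 (by norm_num) (hdist y))
  refine ⟨σ, measurable_of_tendsto_metrizable (fun m => measurable_from_nat.comp (hF m))
    (tendsto_pi_nhds.mpr hσ), fun y x hx => ?_⟩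
  choose x' hx' hx'C using hball y x hx
  have hlim : Tendsto x' atTop (𝓝 (σ y)) := by
    refine (hσ y).congr_dist (squeeze_zero (fun _ => dist_nonneg) (fun m => ?_)
      (tendsto_pow_atTop_nhds_zero_of_lt_one (by norm_num : (0 : ℝ) ≤ 1 / 2) (by norm_num)))
    exact mem_closedBall_comm.mp (hx' m).1
  exact hC.mem_of_tendsto (tendsto_const_nhds.prodMk_nhds hlim) (Eventually.of_forall hx'C)

/-- An `ε`-optimal measurable selection: the fibres `{x | G (y, x) ≤ (j + 1) ε}` are closed, so a
measurable selection exists on each level set of `⌊v / ε⌋`, and these are glued together. -/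
theorem exists_measurable_selection_le_add (hQ : IsCompact Q) (hC : IsClosed C)
    (hCQ : ∀ z ∈ C, z.2 ∈ Q) {G : α × β → ℝ} (hG : Continuous G) {v : α → ℝ}
    (hv : Measurable v) {ε : ℝ} (hε : 0 < ε)
    {D : Set α} (hD : ∀ y ∈ D, ∀ c, v y < c → ∃ x, (y, x) ∈ C ∧ G (y, x) < c) :
    ∃ σ : α → β, Measurable σ ∧ ∀ y ∈ D, (y, σ y) ∈ C ∧ G (y, σ y) ≤ v y + ε := by
  have hsel : ∀ j : ℤ, ∃ σ : α → β, Measurable σ ∧ ∀ y x, (y, x) ∈ C ∧ G (y, x) ≤ (j + 1) * ε →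
      (y, σ y) ∈ C ∧ G (y, σ y) ≤ (j + 1) * ε := fun j =>
    exists_measurable_selection hQ (hC.inter (isClosed_le hG continuous_const))
      fun z hz => hCQ z hz.1
  choose σ hσm hσ using hsel
  refine ⟨fun y => σ ⌊v y / ε⌋ y, (hv.div_const ε).floor.apply_of_countable hσm, fun y hy => ?_⟩
  have hfloor_le : ⌊v y / ε⌋ * ε ≤ v y := (le_div_iff₀ hε).mp (Int.floor_le _)
  have hlt_floor : v y < (⌊v y / ε⌋ + 1) * ε := (div_lt_iff₀ hε).mp (Int.lt_floor_add_one _)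
  obtain ⟨x, hx, hGx⟩ := hD y hy _ hlt_floor
  obtain ⟨hσC, hσG⟩ := hσ _ y x ⟨hx, hGx.le⟩
  exact ⟨hσC, by linarith⟩

end MeasurableSelection

section TwoStage

variable {X1 X2 W : Type*}

-- `sInf ∅ = 0` in `ℝ`: this is the value function only where the second stage is feasible.
noncomputable def secondStageValue (K2 : Set (X1 × X2 × W)) (F2 : X1 × X2 → ℝ) (x1 : X1)
    (y : W) : ℝ :=
  sInf {c | ∃ x2, (x1, x2, y) ∈ K2 ∧ c = F2 (x1, x2)}

noncomputable def twoStageValues [MeasurableSpace W] (K1 : Set X1) (K2 : Set (X1 × X2 × W))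
    (φ : Measure W) (F1 : X1 → ℝ) (F2 : X1 × X2 → ℝ) : Set ℝ :=
  {c | ∃ x1 ∈ K1, c = F1 x1 + ∫ y, secondStageValue K2 F2 x1 y ∂φ}

def gmpValues [MeasurableSpace X1] [MeasurableSpace X2] [MeasurableSpace W] (K1 : Set X1)
    (K2 : Set (X1 × X2 × W)) (φ : Measure W) (F1 : X1 → ℝ) (F2 : X1 × X2 → ℝ) : Set ℝ :=
  {c | ∃ (μ1 : Measure X1) (μ2 : Measure (X1 × X2 × W)),
    IsProbabilityMeasure μ1 ∧ IsFiniteMeasure μ2 ∧ μ1 K1ᶜ = 0 ∧ μ2 K2ᶜ = 0 ∧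
    Measure.map (fun t => (t.1, t.2.2)) μ2 = μ1.prod φ ∧
    c = (∫ x1, F1 x1 ∂μ1) + ∫ t, F2 (t.1, t.2.1) ∂μ2}

section SecondStageValue

variable {K2 : Set (X1 × X2 × W)} {F2 : X1 × X2 → ℝ} {C : ℝ} {x1 : X1} {x2 : X2} {y : W}

theorem secondStageValue_le (hC : ∀ t ∈ K2, ‖F2 (t.1, t.2.1)‖ ≤ C) (h : (x1, x2, y) ∈ K2) :
    secondStageValue K2 F2 x1 y ≤ F2 (x1, x2) :=
  csInf_le ⟨-C, by rintro _ ⟨x2', h', rfl⟩; exact neg_le_of_abs_le (hC _ h')⟩ ⟨x2, h, rfl⟩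

theorem norm_secondStageValue_le (hC : ∀ t ∈ K2, ‖F2 (t.1, t.2.1)‖ ≤ C) (h : (x1, x2, y) ∈ K2) :
    ‖secondStageValue K2 F2 x1 y‖ ≤ C := by
  refine abs_le.mpr ⟨le_csInf ?_ ?_, (secondStageValue_le hC h).trans (le_of_abs_le (hC _ h))⟩
  · exact ⟨F2 (x1, x2), x2, h, rfl⟩
  · rintro _ ⟨x2', h', rfl⟩
    exact neg_le_of_abs_le (hC _ h')

theorem exists_lt_of_secondStageValue_lt (h : (x1, x2, y) ∈ K2) {c : ℝ}
    (hc : secondStageValue K2 F2 x1 y < c) : ∃ x2', (x1, x2', y) ∈ K2 ∧ F2 (x1, x2') < c := by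
  obtain ⟨_, ⟨x2', h', rfl⟩, hlt⟩ :=
    exists_lt_of_csInf_lt (s := {c | ∃ x2, (x1, x2, y) ∈ K2 ∧ c = F2 (x1, x2)}) ⟨_, x2, h, rfl⟩ hc
  exact ⟨x2', h', hlt⟩

end SecondStageValue

section Measures

variable [MeasurableSpace W]

theorem ae_norm_secondStageValue_le {K1 : Set X1} {K2 : Set (X1 × X2 × W)} {F2 : X1 × X2 → ℝ}
    {C : ℝ} (hC : ∀ t ∈ K2, ‖F2 (t.1, t.2.1)‖ ≤ C) {Y : Set W} {φ : Measure W} (hφY : φ Yᶜ = 0)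
    (hfeas : ∀ x1 ∈ K1, ∀ y ∈ Y, ∃ x2, (x1, x2, y) ∈ K2) {x1 : X1} (hx1 : x1 ∈ K1) :
    ∀ᵐ y ∂φ, ‖secondStageValue K2 F2 x1 y‖ ≤ C := by
  filter_upwards [mem_ae_iff.mpr hφY] with y hy
  obtain ⟨x2, h⟩ := hfeas x1 hx1 y hy
  exact norm_secondStageValue_le hC h

theorem bddBelow_twoStageValues {K1 : Set X1} {K2 : Set (X1 × X2 × W)} {F1 : X1 → ℝ}
    {F2 : X1 × X2 → ℝ} {C1 C2 : ℝ} (hC1 : ∀ x1 ∈ K1, ‖F1 x1‖ ≤ C1)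
    (hC2 : ∀ t ∈ K2, ‖F2 (t.1, t.2.1)‖ ≤ C2) {Y : Set W} {φ : Measure W} [IsProbabilityMeasure φ]
    (hφY : φ Yᶜ = 0) (hfeas : ∀ x1 ∈ K1, ∀ y ∈ Y, ∃ x2, (x1, x2, y) ∈ K2) :
    BddBelow (twoStageValues K1 K2 φ F1 F2) := by
  refine ⟨-C1 - C2, ?_⟩
  rintro _ ⟨x1, hx1, rfl⟩
  have h2 := norm_integral_le_of_norm_le_const (ae_norm_secondStageValue_le hC2 hφY hfeas hx1)
  rw [probReal_univ, mul_one] at h2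
  linarith [neg_le_of_abs_le (hC1 x1 hx1), neg_le_of_abs_le h2]

variable [MeasurableSpace X1] [MeasurableSpace X2]

theorem le_integral_add_integral_of_map_eq_prod {μ1 : Measure X1} [IsProbabilityMeasure μ1]
    {φ : Measure W} [SFinite φ] {μ2 : Measure (X1 × X2 × W)}
    (hmap : μ2.map (fun t => (t.1, t.2.2)) = μ1.prod φ)
    {F1 : X1 → ℝ} {F2 : X1 × X2 → ℝ} {v : X1 → W → ℝ} {ρ : ℝ}
    (hF1 : Integrable F1 μ1) (hF2 : Integrable (fun t => F2 (t.1, t.2.1)) μ2)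
    (hv : Integrable (Function.uncurry v) (μ1.prod φ))
    (hvF2 : ∀ᵐ t ∂μ2, v t.1 t.2.2 ≤ F2 (t.1, t.2.1))
    (hρ : ∀ᵐ x1 ∂μ1, ρ ≤ F1 x1 + ∫ y, v x1 y ∂φ) :
    ρ ≤ (∫ x1, F1 x1 ∂μ1) + ∫ t, F2 (t.1, t.2.1) ∂μ2 := by
  have hπ : Measurable fun t : X1 × X2 × W => (t.1, t.2.2) := by fun_prop
  rw [← hmap] at hv
  have hvμ2 : Integrable (fun t => v t.1 t.2.2) μ2 :=
    (integrable_map_measure hv.aestronglyMeasurable hπ.aemeasurable).mp hv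
  calc ρ = ∫ _, ρ ∂μ1 := by simp
    _ ≤ ∫ x1, (F1 x1 + ∫ y, v x1 y ∂φ) ∂μ1 :=
      integral_mono_ae (integrable_const ρ) (hF1.add (hmap ▸ hv).integral_prod_left) hρ
    _ = (∫ x1, F1 x1 ∂μ1) + ∫ z, Function.uncurry v z ∂(μ1.prod φ) := by
      rw [integral_add hF1 (hmap ▸ hv).integral_prod_left, integral_prod _ (hmap ▸ hv)]
      rfl
    _ = (∫ x1, F1 x1 ∂μ1) + ∫ t, v t.1 t.2.2 ∂μ2 := by
      rw [← hmap, integral_map hπ.aemeasurable hv.aestronglyMeasurable]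
      rfl
    _ ≤ (∫ x1, F1 x1 ∂μ1) + ∫ t, F2 (t.1, t.2.1) ∂μ2 :=
      add_le_add le_rfl (integral_mono_ae hvμ2 hF2 hvF2)

theorem add_integral_mem_gmpValues [MeasurableSingletonClass X1] {K1 : Set X1}
    {K2 : Set (X1 × X2 × W)} (hK2 : MeasurableSet K2) {φ : Measure W} [IsProbabilityMeasure φ]
    {F1 : X1 → ℝ} {F2 : X1 × X2 → ℝ} (hF2 : Measurable F2) {x1 : X1} (hx1 : x1 ∈ K1)
    {σ : W → X2} (hσ : Measurable σ) (hσK2 : ∀ᵐ y ∂φ, (x1, σ y, y) ∈ K2) :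
    F1 x1 + ∫ y, F2 (x1, σ y) ∂φ ∈ gmpValues K1 K2 φ F1 F2 := by
  have hτ : Measurable fun y => (x1, σ y, y) := by fun_prop
  refine ⟨Measure.dirac x1, φ.map fun y => (x1, σ y, y), inferInstance, inferInstance,
    ?_, ?_, ?_, ?_⟩
  · simp [Measure.dirac_apply, hx1]
  · rw [Measure.map_apply hτ hK2.compl]
    exact hσK2
  · rw [Measure.map_map (by fun_prop) hτ, Measure.dirac_prod]
    rfl
  · have hF2t : Measurable fun t : X1 × X2 × W => F2 (t.1, t.2.1) := by fun_prop
    rw [integral_dirac, integral_map hτ.aemeasurable hF2t.aestronglyMeasurable]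

end Measures

section Topological

variable [TopologicalSpace X1] [MeasurableSpace X1] [OpensMeasurableSpace X1]
  [MetricSpace X2] [SecondCountableTopology X2] [MeasurableSpace X2] [BorelSpace X2]
  [TopologicalSpace W] [SecondCountableTopology W] [MeasurableSpace W] [OpensMeasurableSpace W]
  {K1 : Set X1} {K2 : Set (X1 × X2 × W)} {Y : Set W} {φ : Measure W} [IsProbabilityMeasure φ]
  {F1 : X1 → ℝ} {F2 : X1 × X2 → ℝ}

theorem sInf_twoStageValues_le_of_mem_gmpValues (hK1 : IsCompact K1) (hK2 : IsCompact K2)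
    (hF1 : Continuous F1) (hF2 : Continuous F2) (hφY : φ Yᶜ = 0)
    (hfeas : ∀ x1 ∈ K1, ∀ y ∈ Y, ∃ x2, (x1, x2, y) ∈ K2)
    (hv : Measurable (Function.uncurry (secondStageValue K2 F2))) {c : ℝ}
    (hc : c ∈ gmpValues K1 K2 φ F1 F2) : sInf (twoStageValues K1 K2 φ F1 F2) ≤ c := by
  obtain ⟨μ1, μ2, hμ1, hμ2, hμ1K1, hμ2K2, hmap, rfl⟩ := hc
  have hF2t : Continuous fun t : X1 × X2 × W => F2 (t.1, t.2.1) := by fun_prop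
  obtain ⟨C1, hC1⟩ := hK1.exists_bound_of_continuousOn hF1.continuousOn
  obtain ⟨C2, hC2⟩ := hK2.exists_bound_of_continuousOn hF2t.continuousOn
  have hK1ae : ∀ᵐ x1 ∂μ1, x1 ∈ K1 := mem_ae_iff.mpr hμ1K1
  have hK2ae : ∀ᵐ t ∂μ2, t ∈ K2 := mem_ae_iff.mpr hμ2K2
  have hvbdd : ∀ᵐ z ∂μ1.prod φ, ‖Function.uncurry (secondStageValue K2 F2) z‖ ≤ C2 := by
    filter_upwards [Measure.quasiMeasurePreserving_fst.ae hK1ae,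
      Measure.quasiMeasurePreserving_snd.ae (mem_ae_iff.mpr hφY)] with z hz1 hz2
    obtain ⟨x2, h⟩ := hfeas z.1 hz1 z.2 hz2
    exact norm_secondStageValue_le hC2 h
  refine le_integral_add_integral_of_map_eq_prod hmap
    (.of_bound hF1.aestronglyMeasurable C1 (hK1ae.mono hC1))
    (.of_bound hF2t.aestronglyMeasurable C2 (hK2ae.mono hC2))
    (.of_bound hv.aestronglyMeasurable C2 hvbdd)
    (hK2ae.mono fun t ht => secondStageValue_le hC2 ht)
    (hK1ae.mono fun x1 hx1 => csInf_le (bddBelow_twoStageValues hC1 hC2 hφY hfeas) ⟨x1, hx1, rfl⟩)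

theorem exists_mem_gmpValues_le_add [T2Space X1] [CompleteSpace X2] [T2Space W] (hK2 : IsCompact K2) (hF2 : Continuous F2) (hφY : φ Yᶜ = 0)
    (hfeas : ∀ x1 ∈ K1, ∀ y ∈ Y, ∃ x2, (x1, x2, y) ∈ K2)
    (hv : Measurable (Function.uncurry (secondStageValue K2 F2))) {x1 : X1} (hx1 : x1 ∈ K1)
    {ε : ℝ} (hε : 0 < ε) :
    ∃ c ∈ gmpValues K1 K2 φ F1 F2, c ≤ F1 x1 + ∫ y, secondStageValue K2 F2 x1 y ∂φ + ε := by
  have hYae : ∀ᵐ y ∂φ, y ∈ Y := mem_ae_iff.mpr hφY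
  have : Nonempty X2 := by
    obtain ⟨y, hy⟩ := hYae.exists
    exact (hfeas x1 hx1 y hy).nonempty
  obtain ⟨C2, hC2⟩ := hK2.exists_bound_of_continuousOn
    (show Continuous fun t : X1 × X2 × W => F2 (t.1, t.2.1) by fun_prop).continuousOn
  have hvx1 : Measurable (secondStageValue K2 F2 x1) := hv.comp measurable_prodMk_left
  obtain ⟨σ, hσ, hσK2⟩ := exists_measurable_selection_le_add (C := {z | (x1, z.2, z.1) ∈ K2})
    (hK2.image (show Continuous fun t : X1 × X2 × W => t.2.1 by fun_prop))
    (hK2.isClosed.preimage (by fun_prop)) (fun z hz => ⟨_, hz, rfl⟩)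
    (show Continuous fun z : W × X2 => F2 (x1, z.2) by fun_prop) hvx1 hε
    (fun y hy c hc => (hfeas x1 hx1 y hy).elim fun _ h => exists_lt_of_secondStageValue_lt h hc)
  refine ⟨_, add_integral_mem_gmpValues hK2.isClosed.measurableSet hF2.measurable hx1 hσ
    (hYae.mono fun y hy => (hσK2 y hy).1), ?_⟩
  have hσF2 : Integrable (fun y => F2 (x1, σ y)) φ :=
    .of_bound (by fun_prop) C2 (hYae.mono fun y hy => hC2 _ (hσK2 y hy).1)
  have hvint : Integrable (secondStageValue K2 F2 x1) φ :=
    .of_bound hvx1.aestronglyMeasurable C2 (ae_norm_secondStageValue_le hC2 hφY hfeas hx1)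
  have hle : ∫ y, F2 (x1, σ y) ∂φ ≤ ∫ y, (secondStageValue K2 F2 x1 y + ε) ∂φ :=
    integral_mono_ae hσF2 (hvint.add (integrable_const ε)) (hYae.mono fun y hy => (hσK2 y hy).2)
  rw [integral_add hvint (integrable_const ε), integral_const, probReal_univ, one_smul] at hle
  linarith

end Topological

end TwoStage

theorem gmp_equals_two_stage_general
    (n1 n2 p : ℕ)
    (f1 : MvPolynomial (Fin n1) ℝ) (f2 : MvPolynomial (Fin n1 ⊕ Fin n2) ℝ)
    (K1 : Set (Fin n1 → ℝ)) (Y : Set (Fin p → ℝ))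
    (K2 : Set ((Fin n1 → ℝ) × (Fin n2 → ℝ) × (Fin p → ℝ)))
    (φ : Measure (Fin p → ℝ)) (hφ : IsProbabilityMeasure φ) (hφY : φ Yᶜ = 0)
    (hK1c : IsCompact K1) (hK2c : IsCompact K2)
    (hK1ne : K1.Nonempty)
    (hfeas : ∀ x1 ∈ K1, ∀ y ∈ Y, ∃ x2, (x1, x2, y) ∈ K2)
    (v : (Fin n1 → ℝ) → (Fin p → ℝ) → ℝ)
    (hv : ∀ x1 y, v x1 y =
      sInf {c | ∃ x2, (x1, x2, y) ∈ K2 ∧ c = eval (Sum.elim x1 x2) f2})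
    (hvmeas : Measurable fun t : (Fin n1 → ℝ) × (Fin p → ℝ) => v t.1 t.2)
    (ρ ρ12 : ℝ)
    (hρ : ρ = sInf {c | ∃ x1 ∈ K1, c = eval x1 f1 + ∫ y in Y, v x1 y ∂φ})
    (hρ12 : ρ12 = sInf {c | ∃ (μ1 : Measure (Fin n1 → ℝ))
        (μ2 : Measure ((Fin n1 → ℝ) × (Fin n2 → ℝ) × (Fin p → ℝ))),
      IsProbabilityMeasure μ1 ∧ IsFiniteMeasure μ2 ∧
      μ1 K1ᶜ = 0 ∧ μ2 K2ᶜ = 0 ∧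
      Measure.map (fun t => (t.1, t.2.2)) μ2 = μ1.prod φ ∧
      c = (∫ x1, eval x1 f1 ∂μ1) + ∫ t, eval (Sum.elim t.1 t.2.1) f2 ∂μ2}) :
    ρ12 = ρ := by
  have hF1 : Continuous fun x1 : Fin n1 → ℝ => eval x1 f1 := continuous_eval f1
  have hF2 : Continuous fun z : (Fin n1 → ℝ) × (Fin n2 → ℝ) => eval (Sum.elim z.1 z.2) f2 :=
    (continuous_eval f2).comp Homeomorph.sumArrowHomeomorphProdArrow.symm.continuous
  obtain rfl : v = secondStageValue K2 fun z => eval (Sum.elim z.1 z.2) f2 := funext₂ hv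
  rw [Measure.restrict_eq_self_of_ae_mem (mem_ae_iff.mpr hφY)] at hρ
  rw [hρ12, hρ]
  exact csInf_eq_csInf_of_forall_exists_le_add (hK1ne.elim fun x1 hx1 => ⟨_, x1, hx1, rfl⟩)
    (fun c hc => sInf_twoStageValues_le_of_mem_gmpValues hK1c hK2c hF1 hF2 hφY hfeas hvmeas hc)
    (fun _ ⟨x1, hx1, hb⟩ ε hε => hb ▸ exists_mem_gmpValues_le_add hK2c hF2 hφY hfeas hvmeas hx1 hε)

/-- **Theorem 1(a).** Under compactness of `K1`, `K2`, `Y`, nonemptiness of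
`K1` and `Y`, second-stage feasibility for every `x1 ∈ K1`, `y ∈ Y`, and measurability of
the second-stage value function `v`, the optimal value `ρ₁₂` of the generalized moment
problem equals the optimal value `ρ` of the two-stage stochastic program. -/
theorem gmp_equals_two_stage
    (n1 n2 p Nq Nh Ng NgY : ℕ) (hn1 : 0 < n1) (hn2 : 0 < n2) (hp : 0 < p)
    (f1 : MvPolynomial (Fin n1) ℝ) (f2 : MvPolynomial (Fin n1 ⊕ Fin n2) ℝ)
    (q : Fin Nq → MvPolynomial (Fin n1) ℝ)
    (h : Fin Nh → MvPolynomial (Fin n1 ⊕ Fin n2 ⊕ Fin p) ℝ)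
    (g : Fin Ng → MvPolynomial (Fin n1 ⊕ Fin n2 ⊕ Fin p) ℝ)
    (gY : Fin NgY → MvPolynomial (Fin p) ℝ)
    (K1 : Set (Fin n1 → ℝ)) (Y : Set (Fin p → ℝ))
    (K2 : Set ((Fin n1 → ℝ) × (Fin n2 → ℝ) × (Fin p → ℝ)))
    (hK1 : K1 = {x1 | ∀ l, 0 ≤ eval x1 (q l)})
    (hY : Y = {y | ∀ j, 0 ≤ eval y (gY j)})
    (hK2 : K2 = {t | t.1 ∈ K1 ∧ t.2.2 ∈ Y ∧
      (∀ i, eval (Sum.elim t.1 (Sum.elim t.2.1 t.2.2)) (h i) = 0) ∧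
      (∀ j, 0 ≤ eval (Sum.elim t.1 (Sum.elim t.2.1 t.2.2)) (g j))})
    (φ : Measure (Fin p → ℝ)) (hφ : IsProbabilityMeasure φ) (hφY : φ Yᶜ = 0)
    (hK1c : IsCompact K1) (hK2c : IsCompact K2) (hYc : IsCompact Y)
    (hK1ne : K1.Nonempty) (hYne : Y.Nonempty)
    (hfeas : ∀ x1 ∈ K1, ∀ y ∈ Y, ∃ x2, (x1, x2, y) ∈ K2)
    (v : (Fin n1 → ℝ) → (Fin p → ℝ) → ℝ)
    (hv : ∀ x1 y, v x1 y =
      sInf {c | ∃ x2, (x1, x2, y) ∈ K2 ∧ c = eval (Sum.elim x1 x2) f2})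
    (hvmeas : Measurable fun t : (Fin n1 → ℝ) × (Fin p → ℝ) => v t.1 t.2)
    (ρ ρ12 : ℝ)
    (hρ : ρ = sInf {c | ∃ x1 ∈ K1, c = eval x1 f1 + ∫ y in Y, v x1 y ∂φ})
    (hρ12 : ρ12 = sInf {c | ∃ (μ1 : Measure (Fin n1 → ℝ))
        (μ2 : Measure ((Fin n1 → ℝ) × (Fin n2 → ℝ) × (Fin p → ℝ))),
      IsProbabilityMeasure μ1 ∧ IsFiniteMeasure μ2 ∧
      μ1 K1ᶜ = 0 ∧ μ2 K2ᶜ = 0 ∧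
      Measure.map (fun t => (t.1, t.2.2)) μ2 = μ1.prod φ ∧
      c = (∫ x1, eval x1 f1 ∂μ1) + ∫ t, eval (Sum.elim t.1 t.2.1) f2 ∂μ2}) :
    ρ12 = ρ :=
  gmp_equals_two_stage_general n1 n2 p f1 f2 K1 Y K2 φ hφ hφY hK1c hK2c hK1ne hfeas v hv hvmeas ρ
    ρ12 hρ hρ12
end

section
/- Feasible construction from a deterministic first-stage decision: let x1* ∈ K1 and let s : ℝ^p → ℝ^{n2} be a Borel measurable map such that for φ-almost every y ∈ Y, (x1*, s(y), y) ∈ K2 and f2(x1*, s(y)) = v*(x1*, y). Then the pair (δ_{x1*}, μ2), where μ2 is the pushforward of φ under y ↦ (x1*, s(y), y), is feasible for the generalized moment problem — δ_{x1*} is a probability measure supported in K1, μ2 is supported in K2, and the pushforward of μ2 under (x1,x2,y) ↦ (x1,y) equals δ_{x1*} ⊗ φ — and its objective value satisfies ∫ f1 dδ_{x1*} + ∫ f2 dμ2 = f1(x1*) + ∫_Y v*(x1*, y) dφ(y); consequently ρ₁₂ ≤ f1(x1*) + ∫_Y v*(x1*, y) dφ(y). -/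
/-!
The pushforward of `φ` under `y ↦ (x1*, s y, y)` has `(x1, y)`-marginal `δ_{x1*} ⊗ φ` and
lives on `K2`, so the pair is feasible; since `s` is an optimal second stage `φ`-a.e., its
objective is `f1 x1* + ∫ v*(x1*, ·) dφ`. For the bound on `ρ₁₂` the set of feasible
objective values must be bounded below (otherwise its `sInf` is a junk value): both
objectives are continuous, hence bounded on the compact sets `K1`, `K2`, and every feasible
`μ1`, `μ2` has total mass one.
-/

open MeasureTheory MvPolynomial Set

lemma le_integral_of_measure_univ_le_one {α : Type*} [MeasurableSpace α] {μ : Measure α}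
    {f : α → ℝ} {m : ℝ} (hμ : μ univ ≤ 1) (hm : m ≤ 0) (hf : ∀ᵐ a ∂μ, m ≤ f a) :
    m ≤ ∫ a, f a ∂μ := by
  have : IsFiniteMeasure μ := ⟨hμ.trans_lt ENNReal.one_lt_top⟩
  by_cases hfi : Integrable f μ
  · have hmass : μ.real univ ≤ 1 :=
      ENNReal.toReal_le_of_le_ofReal zero_le_one (by simpa)
    calc m ≤ μ.real univ * m := by nlinarith [measureReal_nonneg (μ := μ) (s := univ)]
      _ = ∫ _, m ∂μ := by rw [integral_const, smul_eq_mul]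
      _ ≤ ∫ a, f a ∂μ := integral_mono_ae (integrable_const m) hfi hf
  · rw [integral_undef hfi]
    exact hm

lemma IsCompact.exists_le_integral_of_measure_univ_le_one {α : Type*} [TopologicalSpace α]
    [MeasurableSpace α] {K : Set α} (hK : IsCompact K) {f : α → ℝ} (hf : ContinuousOn f K) :
    ∃ m, ∀ μ : Measure α, μ univ ≤ 1 → μ Kᶜ = 0 → m ≤ ∫ a, f a ∂μ := by
  obtain ⟨b, hb⟩ := hK.bddBelow_image hf
  refine ⟨min b 0, fun μ hμ hK0 =>
    le_integral_of_measure_univ_le_one hμ (min_le_right _ _) ?_⟩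
  filter_upwards [mem_ae_iff.mpr hK0] with a ha
  exact (min_le_left _ _).trans (hb (mem_image_of_mem f ha))

section GMP

variable {α β γ : Type*} [MeasurableSpace α] [MeasurableSpace β] [MeasurableSpace γ]

/-- The set whose infimum is the GMP value `ρ₁₂`. -/
def gmpObjectiveValues (K1 : Set α) (K2 : Set (α × β × γ)) (φ : Measure γ) (F1 : α → ℝ)
    (F2 : α × β × γ → ℝ) : Set ℝ :=
  {c | ∃ (μ1 : Measure α) (μ2 : Measure (α × β × γ)),
    IsProbabilityMeasure μ1 ∧ IsFiniteMeasure μ2 ∧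
    μ1 K1ᶜ = 0 ∧ μ2 K2ᶜ = 0 ∧
    Measure.map (fun t => (t.1, t.2.2)) μ2 = μ1.prod φ ∧
    c = (∫ x, F1 x ∂μ1) + ∫ t, F2 t ∂μ2}

lemma measure_univ_eq_one_of_map_eq_prod {μ1 : Measure α} {μ2 : Measure (α × β × γ)}
    {φ : Measure γ} [IsProbabilityMeasure μ1] [IsProbabilityMeasure φ]
    (hmarg : Measure.map (fun t => (t.1, t.2.2)) μ2 = μ1.prod φ) : μ2 univ = 1 := by
  have hπ : Measurable fun t : α × β × γ => (t.1, t.2.2) :=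
    measurable_fst.prodMk measurable_snd.snd
  rw [← preimage_univ (f := fun t : α × β × γ => (t.1, t.2.2)),
    ← Measure.map_apply hπ .univ, hmarg, measure_univ]

lemma bddBelow_gmpObjectiveValues [TopologicalSpace α] [TopologicalSpace β]
    [TopologicalSpace γ] {K1 : Set α} {K2 : Set (α × β × γ)} {φ : Measure γ}
    [IsProbabilityMeasure φ] {F1 : α → ℝ} {F2 : α × β × γ → ℝ} (hK1 : IsCompact K1)
    (hK2 : IsCompact K2) (hF1 : ContinuousOn F1 K1) (hF2 : ContinuousOn F2 K2) :
    BddBelow (gmpObjectiveValues K1 K2 φ F1 F2) := by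
  obtain ⟨m1, hm1⟩ := hK1.exists_le_integral_of_measure_univ_le_one hF1
  obtain ⟨m2, hm2⟩ := hK2.exists_le_integral_of_measure_univ_le_one hF2
  refine ⟨m1 + m2, ?_⟩
  rintro _ ⟨μ1, μ2, hμ1, -, hμ1K, hμ2K, hmarg, rfl⟩
  exact add_le_add (hm1 μ1 measure_univ.le hμ1K)
    (hm2 μ2 (measure_univ_eq_one_of_map_eq_prod hmarg).le hμ2K)

lemma map_map_graph_eq_dirac_prod {φ : Measure γ} [SFinite φ] (a : α) {s : γ → β}
    (hs : Measurable s) :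
    Measure.map (fun t => (t.1, t.2.2)) (Measure.map (fun y => (a, s y, y)) φ)
      = (Measure.dirac a).prod φ := by
  have hgraph : Measurable fun y => (a, s y, y) :=
    measurable_const.prodMk (hs.prodMk measurable_id)
  rw [Measure.map_map (measurable_fst.prodMk measurable_snd.snd) hgraph, Measure.dirac_prod]
  rfl

end GMP

theorem gmp_feasible_from_deterministic_first_stage_general
    (n1 n2 p : ℕ)
    (f1 : MvPolynomial (Fin n1) ℝ) (f2 : MvPolynomial (Fin n1 ⊕ Fin n2) ℝ)
    (K1 : Set (Fin n1 → ℝ)) (Y : Set (Fin p → ℝ))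
    (K2 : Set ((Fin n1 → ℝ) × (Fin n2 → ℝ) × (Fin p → ℝ)))
    (φ : Measure (Fin p → ℝ)) (hφ : IsProbabilityMeasure φ) (hφY : φ Yᶜ = 0)
    (hK1c : IsCompact K1) (hK2c : IsCompact K2)
    (v : (Fin n1 → ℝ) → (Fin p → ℝ) → ℝ)
    (ρ12 : ℝ)
    (hρ12 : ρ12 = sInf {c | ∃ (μ1 : Measure (Fin n1 → ℝ))
        (μ2 : Measure ((Fin n1 → ℝ) × (Fin n2 → ℝ) × (Fin p → ℝ))),
      IsProbabilityMeasure μ1 ∧ IsFiniteMeasure μ2 ∧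
      μ1 K1ᶜ = 0 ∧ μ2 K2ᶜ = 0 ∧
      Measure.map (fun t => (t.1, t.2.2)) μ2 = μ1.prod φ ∧
      c = (∫ x1, eval x1 f1 ∂μ1) + ∫ t, eval (Sum.elim t.1 t.2.1) f2 ∂μ2})
    (x1s : Fin n1 → ℝ) (hx1s : x1s ∈ K1)
    (s : (Fin p → ℝ) → (Fin n2 → ℝ)) (hs : Measurable s)
    (hsae : ∀ᵐ y ∂φ, y ∈ Y →
      (x1s, s y, y) ∈ K2 ∧ eval (Sum.elim x1s (s y)) f2 = v x1s y) :
    IsProbabilityMeasure (Measure.dirac x1s) ∧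
    (Measure.dirac x1s) K1ᶜ = 0 ∧
    IsFiniteMeasure (Measure.map (fun y => (x1s, s y, y)) φ) ∧
    (Measure.map (fun y => (x1s, s y, y)) φ) K2ᶜ = 0 ∧
    Measure.map (fun t => (t.1, t.2.2)) (Measure.map (fun y => (x1s, s y, y)) φ)
      = (Measure.dirac x1s).prod φ ∧
    (∫ x1, eval x1 f1 ∂(Measure.dirac x1s)) +
        (∫ t, eval (Sum.elim t.1 t.2.1) f2 ∂(Measure.map (fun y => (x1s, s y, y)) φ))
      = eval x1s f1 + ∫ y in Y, v x1s y ∂φ ∧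
    ρ12 ≤ eval x1s f1 + ∫ y in Y, v x1s y ∂φ := by
  have hgraph : Measurable fun y => (x1s, s y, y) :=
    measurable_const.prodMk (hs.prodMk measurable_id)
  have hF2 : Continuous fun t : (Fin n1 → ℝ) × (Fin n2 → ℝ) × (Fin p → ℝ) =>
      eval (Sum.elim t.1 t.2.1) f2 :=
    f2.continuous_eval.comp (Homeomorph.sumArrowHomeomorphProdArrow.symm.continuous.comp
      (continuous_fst.prodMk continuous_snd.fst))
  have hY : ∀ᵐ y ∂φ, y ∈ Y := mem_ae_iff.mpr hφY
  have hopt : ∀ᵐ y ∂φ, (x1s, s y, y) ∈ K2 ∧ eval (Sum.elim x1s (s y)) f2 = v x1s y := by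
    filter_upwards [hsae, hY] with y hy hyY using hy hyY
  have hδK1 : (Measure.dirac x1s) K1ᶜ = 0 := by simp [Measure.dirac_apply, hx1s]
  have hμ2K2 : (Measure.map (fun y => (x1s, s y, y)) φ) K2ᶜ = 0 := by
    rw [Measure.map_apply hgraph hK2c.isClosed.measurableSet.compl]
    exact mem_ae_iff.mp (hopt.mono fun _ hy => hy.1)
  have hobj : (∫ x1, eval x1 f1 ∂(Measure.dirac x1s)) +
        (∫ t, eval (Sum.elim t.1 t.2.1) f2 ∂(Measure.map (fun y => (x1s, s y, y)) φ))
      = eval x1s f1 + ∫ y in Y, v x1s y ∂φ := by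
    rw [integral_dirac, integral_map hgraph.aemeasurable hF2.aestronglyMeasurable,
      integral_congr_ae (hopt.mono fun _ hy => hy.2), Measure.restrict_eq_self_of_ae_mem hY]
  have hmarg := map_map_graph_eq_dirac_prod (φ := φ) x1s hs
  have hμ2 : IsProbabilityMeasure (Measure.map (fun y => (x1s, s y, y)) φ) :=
    Measure.isProbabilityMeasure_map hgraph.aemeasurable
  refine ⟨inferInstance, hδK1, inferInstance, hμ2K2, hmarg, hobj, ?_⟩
  rw [hρ12]
  exact csInf_le (bddBelow_gmpObjectiveValues (φ := φ) hK1c hK2c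
      f1.continuous_eval.continuousOn hF2.continuousOn)
    ⟨_, _, inferInstance, inferInstance, hδK1, hμ2K2, hmarg, hobj.symm⟩

/-- Let `x1s ∈ K1` and let `s` be a Borel measurable map such that for
`φ`-almost every `y ∈ Y`, `(x1s, s y, y) ∈ K2` and `f2 (x1s, s y) = v x1s y`. Then the
pair `(δ_{x1s}, μ2)`, where `μ2` is the pushforward of `φ` under `y ↦ (x1s, s y, y)`, is
feasible for the generalized moment problem, its objective value equals
`f1 x1s + ∫_Y v x1s y dφ`, and consequently `ρ₁₂ ≤ f1 x1s + ∫_Y v x1s y dφ`. -/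
theorem gmp_feasible_from_deterministic_first_stage
    (n1 n2 p Nq Nh Ng NgY : ℕ) (hn1 : 0 < n1) (hn2 : 0 < n2) (hp : 0 < p)
    (f1 : MvPolynomial (Fin n1) ℝ) (f2 : MvPolynomial (Fin n1 ⊕ Fin n2) ℝ)
    (q : Fin Nq → MvPolynomial (Fin n1) ℝ)
    (h : Fin Nh → MvPolynomial (Fin n1 ⊕ Fin n2 ⊕ Fin p) ℝ)
    (g : Fin Ng → MvPolynomial (Fin n1 ⊕ Fin n2 ⊕ Fin p) ℝ)
    (gY : Fin NgY → MvPolynomial (Fin p) ℝ)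
    (K1 : Set (Fin n1 → ℝ)) (Y : Set (Fin p → ℝ))
    (K2 : Set ((Fin n1 → ℝ) × (Fin n2 → ℝ) × (Fin p → ℝ)))
    (hK1 : K1 = {x1 | ∀ l, 0 ≤ eval x1 (q l)})
    (hY : Y = {y | ∀ j, 0 ≤ eval y (gY j)})
    (hK2 : K2 = {t | t.1 ∈ K1 ∧ t.2.2 ∈ Y ∧
      (∀ i, eval (Sum.elim t.1 (Sum.elim t.2.1 t.2.2)) (h i) = 0) ∧
      (∀ j, 0 ≤ eval (Sum.elim t.1 (Sum.elim t.2.1 t.2.2)) (g j))})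
    (φ : Measure (Fin p → ℝ)) (hφ : IsProbabilityMeasure φ) (hφY : φ Yᶜ = 0)
    (hK1c : IsCompact K1) (hK2c : IsCompact K2) (hYc : IsCompact Y)
    (v : (Fin n1 → ℝ) → (Fin p → ℝ) → ℝ)
    (hv : ∀ x1 y, v x1 y =
      sInf {c | ∃ x2, (x1, x2, y) ∈ K2 ∧ c = eval (Sum.elim x1 x2) f2})
    (hvmeas : Measurable fun t : (Fin n1 → ℝ) × (Fin p → ℝ) => v t.1 t.2)
    (ρ12 : ℝ)
    (hρ12 : ρ12 = sInf {c | ∃ (μ1 : Measure (Fin n1 → ℝ))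
        (μ2 : Measure ((Fin n1 → ℝ) × (Fin n2 → ℝ) × (Fin p → ℝ))),
      IsProbabilityMeasure μ1 ∧ IsFiniteMeasure μ2 ∧
      μ1 K1ᶜ = 0 ∧ μ2 K2ᶜ = 0 ∧
      Measure.map (fun t => (t.1, t.2.2)) μ2 = μ1.prod φ ∧
      c = (∫ x1, eval x1 f1 ∂μ1) + ∫ t, eval (Sum.elim t.1 t.2.1) f2 ∂μ2})
    (x1s : Fin n1 → ℝ) (hx1s : x1s ∈ K1)
    (s : (Fin p → ℝ) → (Fin n2 → ℝ)) (hs : Measurable s)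
    (hsae : ∀ᵐ y ∂φ, y ∈ Y →
      (x1s, s y, y) ∈ K2 ∧ eval (Sum.elim x1s (s y)) f2 = v x1s y) :
    IsProbabilityMeasure (Measure.dirac x1s) ∧
    (Measure.dirac x1s) K1ᶜ = 0 ∧
    IsFiniteMeasure (Measure.map (fun y => (x1s, s y, y)) φ) ∧
    (Measure.map (fun y => (x1s, s y, y)) φ) K2ᶜ = 0 ∧
    Measure.map (fun t => (t.1, t.2.2)) (Measure.map (fun y => (x1s, s y, y)) φ)
      = (Measure.dirac x1s).prod φ ∧
    (∫ x1, eval x1 f1 ∂(Measure.dirac x1s)) +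
        (∫ t, eval (Sum.elim t.1 t.2.1) f2 ∂(Measure.map (fun y => (x1s, s y, y)) φ))
      = eval x1s f1 + ∫ y in Y, v x1s y ∂φ ∧
    ρ12 ≤ eval x1s f1 + ∫ y in Y, v x1s y ∂φ :=
  gmp_feasible_from_deterministic_first_stage_general n1 n2 p f1 f2 K1 Y K2 φ hφ hφY hK1c hK2c v ρ12
    hρ12 x1s hx1s s hs hsae
end

section
/- Lower bound direction of the equivalence: for every pair (μ1, μ2) feasible for the generalized moment problem — μ1 a Borel probability measure supported in K1, μ2 a nonnegative finite Borel measure supported in K2, and the pushforward of μ2 under (x1,x2,y) ↦ (x1,y) equal to μ1 ⊗ φ — one has ∫ f1 dμ1 + ∫ f2 dμ2 ≥ ∫ f1 dμ1 + ∫_{K1×Y} v*(x1,y) d(μ1 ⊗ φ)(x1,y) ≥ ρ. Consequently ρ₁₂ ≥ ρ. -/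
open MeasureTheory MvPolynomial

/-! Since `f2` is bounded on the compact set `K2`, the value function `v*` is bounded, and
on `K2` it lies below `f2`. Integrating `v*(x1, y) ≤ f2(x1, x2)` against `μ2` and pushing the
left side forward along `(x1, x2, y) ↦ (x1, y)`, whose image measure is `μ1 ⊗ φ`, gives
`∫ v* d(μ1 ⊗ φ) ≤ ∫ f2 dμ2`. By Fubini, `∫ f1 dμ1 + ∫ v* d(μ1 ⊗ φ)` is the `μ1`-average
of `x1 ↦ f1 x1 + ∫ v*(x1, y) dφ(y)`, which is at least `ρ` on `K1`. -/

lemma abs_sInf_le_of_forall_abs_le {S : Set ℝ} {M : ℝ} (hM : 0 ≤ M)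
    (hS : ∀ c ∈ S, |c| ≤ M) : |sInf S| ≤ M := by
  rcases S.eq_empty_or_nonempty with rfl | ⟨c, hc⟩
  · -- `sInf ∅ = 0` in `ℝ`
    simpa using hM
  · have hlow : ∀ c ∈ S, -M ≤ c := fun c hc => neg_le_of_abs_le (hS c hc)
    exact abs_le.2 ⟨le_csInf ⟨c, hc⟩ hlow,
      (csInf_le ⟨-M, hlow⟩ hc).trans (le_of_abs_le (hS c hc))⟩

section ValueFunction

variable {α β γ : Type*} {K : Set (α × β × γ)} {F : α → β → ℝ}

lemma sInf_fiber_le (hF : BddBelow ((fun t => F t.1 t.2.1) '' K)) {t : α × β × γ}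
    (ht : t ∈ K) :
    sInf {c | ∃ x2, (t.1, x2, t.2.2) ∈ K ∧ c = F t.1 x2} ≤ F t.1 t.2.1 := by
  obtain ⟨m, hm⟩ := hF
  refine csInf_le ⟨m, ?_⟩ ⟨t.2.1, ht, rfl⟩
  rintro c ⟨x2, hx2, rfl⟩
  exact hm ⟨_, hx2, rfl⟩

lemma abs_sInf_fiber_le {M : ℝ} (hM : 0 ≤ M) (hF : ∀ t ∈ K, |F t.1 t.2.1| ≤ M)
    (x : α) (y : γ) :
    |sInf {c | ∃ x2, (x, x2, y) ∈ K ∧ c = F x x2}| ≤ M :=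
  abs_sInf_le_of_forall_abs_le hM (by rintro c ⟨x2, hx2, rfl⟩; exact hF _ hx2)

end ValueFunction

lemma integral_le_integral_of_map_eq {Ω Z : Type*} [MeasurableSpace Ω] [MeasurableSpace Z]
    {μ : Measure Ω} {ν : Measure Z} {π : Ω → Z} (hπ : Measurable π) (hmap : μ.map π = ν)
    {v : Z → ℝ} {F : Ω → ℝ} (hv : Integrable v ν) (hF : Integrable F μ)
    (hle : ∀ᵐ ω ∂μ, v (π ω) ≤ F ω) : ∫ z, v z ∂ν ≤ ∫ ω, F ω ∂μ := by
  subst hmap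
  rw [integral_map hπ.aemeasurable hv.aestronglyMeasurable]
  exact integral_mono_ae (hv.comp_measurable hπ) hF hle

lemma le_integral_add_integral_prod {α γ : Type*} [MeasurableSpace α] [MeasurableSpace γ]
    {μ : Measure α} [IsProbabilityMeasure μ] {ν : Measure γ} [SFinite ν] {f : α → ℝ}
    {v : α × γ → ℝ} (hf : Integrable f μ) (hv : Integrable v (μ.prod ν)) {ρ : ℝ}
    (hρ : ∀ᵐ x ∂μ, ρ ≤ f x + ∫ y, v (x, y) ∂ν) :
    ρ ≤ ∫ x, f x ∂μ + ∫ z, v z ∂(μ.prod ν) := by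
  rw [integral_prod v hv, ← integral_add hf hv.integral_prod_left]
  simpa using integral_mono_ae (integrable_const ρ) (hf.add hv.integral_prod_left) hρ

lemma ContinuousOn.integrable_of_measure_compl_eq_zero {X E : Type*} [TopologicalSpace X]
    [T2Space X] [MeasurableSpace X] [OpensMeasurableSpace X] [NormedAddCommGroup E]
    {μ : Measure X} [IsFiniteMeasureOnCompacts μ] {K : Set X} {f : X → E}
    (hf : ContinuousOn f K) (hK : IsCompact K) (hμK : μ Kᶜ = 0) : Integrable f μ := by
  simpa only [IntegrableOn, Measure.restrict_eq_self_of_ae_mem (mem_ae_iff.2 hμK)] using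
    hf.integrableOn_compact (μ := μ) hK

section FeasiblePair

variable {n1 n2 p : ℕ} {f1 : MvPolynomial (Fin n1) ℝ} {f2 : MvPolynomial (Fin n1 ⊕ Fin n2) ℝ}
  {K1 : Set (Fin n1 → ℝ)} {Y : Set (Fin p → ℝ)}
  {K2 : Set ((Fin n1 → ℝ) × (Fin n2 → ℝ) × (Fin p → ℝ))}
  {v : (Fin n1 → ℝ) → (Fin p → ℝ) → ℝ} {φ : Measure (Fin p → ℝ)}
  {μ1 : Measure (Fin n1 → ℝ)}
  {μ2 : Measure ((Fin n1 → ℝ) × (Fin n2 → ℝ) × (Fin p → ℝ))}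

lemma continuous_eval_sumElim (f2 : MvPolynomial (Fin n1 ⊕ Fin n2) ℝ) :
    Continuous fun t : (Fin n1 → ℝ) × (Fin n2 → ℝ) × (Fin p → ℝ) =>
      eval (Sum.elim t.1 t.2.1) f2 :=
  (continuous_eval f2).comp <| continuous_pi fun
    | .inl i => (continuous_apply i).comp continuous_fst
    | .inr i => (continuous_apply i).comp (continuous_fst.comp continuous_snd)

lemma exists_abs_valueFunction_le (hK2c : IsCompact K2)
    (hv : ∀ x1 y, v x1 y = sInf {c | ∃ x2, (x1, x2, y) ∈ K2 ∧ c = eval (Sum.elim x1 x2) f2}) :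
    ∃ M, ∀ x1 y, |v x1 y| ≤ M := by
  obtain ⟨M, hM0, hM⟩ := (hK2c.image_of_continuousOn
    (continuous_eval_sumElim f2).continuousOn).isBounded.exists_pos_norm_le
  exact ⟨M, fun x1 y => hv x1 y ▸ abs_sInf_fiber_le (F := fun x1 x2 => eval (Sum.elim x1 x2) f2)
    hM0.le (fun t ht => hM _ ⟨t, ht, rfl⟩) x1 y⟩

lemma integral_valueFunction_le [IsFiniteMeasure μ2] (hK2c : IsCompact K2)
    (hv : ∀ x1 y, v x1 y = sInf {c | ∃ x2, (x1, x2, y) ∈ K2 ∧ c = eval (Sum.elim x1 x2) f2})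
    (hvmeas : Measurable fun t : (Fin n1 → ℝ) × (Fin p → ℝ) => v t.1 t.2)
    (hμ2K2 : μ2 K2ᶜ = 0) (hmap : Measure.map (fun t => (t.1, t.2.2)) μ2 = μ1.prod φ) :
    ∫ t, v t.1 t.2 ∂(μ1.prod φ) ≤ ∫ t, eval (Sum.elim t.1 t.2.1) f2 ∂μ2 := by
  have hf2 := continuous_eval_sumElim (p := p) f2
  have hbdd := hK2c.bddBelow_image hf2.continuousOn
  obtain ⟨M, hM⟩ := exists_abs_valueFunction_le hK2c hv
  have haeK2 : ∀ᵐ t ∂μ2, t ∈ K2 := mem_ae_iff.2 hμ2K2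
  refine integral_le_integral_of_map_eq (by fun_prop) hmap ?_ ?_ ?_
  · exact hmap ▸
      Integrable.of_bound hvmeas.aestronglyMeasurable M (.of_forall fun t => hM t.1 t.2)
  · exact hf2.continuousOn.integrable_of_measure_compl_eq_zero hK2c hμ2K2
  · exact haeK2.mono fun t ht =>
      hv _ _ ▸ sInf_fiber_le (F := fun x1 x2 => eval (Sum.elim x1 x2) f2) hbdd ht

lemma le_integral_add_integral_valueFunction [IsProbabilityMeasure μ1] [IsProbabilityMeasure φ]
    {ρ : ℝ} (hK1c : IsCompact K1) (hK2c : IsCompact K2)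
    (hv : ∀ x1 y, v x1 y = sInf {c | ∃ x2, (x1, x2, y) ∈ K2 ∧ c = eval (Sum.elim x1 x2) f2})
    (hvmeas : Measurable fun t : (Fin n1 → ℝ) × (Fin p → ℝ) => v t.1 t.2)
    (hρ : ρ = sInf {c | ∃ x1 ∈ K1, c = eval x1 f1 + ∫ y in Y, v x1 y ∂φ})
    (hφY : φ Yᶜ = 0) (hμ1K1 : μ1 K1ᶜ = 0) :
    ρ ≤ ∫ x1, eval x1 f1 ∂μ1 + ∫ t, v t.1 t.2 ∂(μ1.prod φ) := by
  obtain ⟨M, hM⟩ := exists_abs_valueFunction_le hK2c hv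
  obtain ⟨m, hm⟩ := hK1c.bddBelow_image (continuous_eval f1).continuousOn
  rw [Measure.restrict_eq_self_of_ae_mem (mem_ae_iff.2 hφY)] at hρ
  have hbdd : BddBelow {c | ∃ x1 ∈ K1, c = eval x1 f1 + ∫ y, v x1 y ∂φ} := by
    refine ⟨m - M, ?_⟩
    rintro c ⟨x1, hx1, rfl⟩
    have hf1 : m ≤ eval x1 f1 := hm ⟨x1, hx1, rfl⟩
    have hvM : |∫ y, v x1 y ∂φ| ≤ M := by
      simpa using norm_integral_le_of_norm_le_const (μ := φ) (f := fun y => v x1 y)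
        (.of_forall fun y => hM x1 y)
    linarith [neg_le_of_abs_le hvM]
  refine le_integral_add_integral_prod
    ((continuous_eval f1).continuousOn.integrable_of_measure_compl_eq_zero hK1c hμ1K1)
    (Integrable.of_bound hvmeas.aestronglyMeasurable M (.of_forall fun t => hM t.1 t.2)) ?_
  filter_upwards [mem_ae_iff.2 hμ1K1] with x1 hx1
  rw [hρ]
  exact csInf_le hbdd ⟨x1, hx1, rfl⟩

lemma le_objective_of_feasible [IsProbabilityMeasure μ1] [IsProbabilityMeasure φ]
    [IsFiniteMeasure μ2] {ρ : ℝ} (hK1c : IsCompact K1) (hK2c : IsCompact K2)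
    (hv : ∀ x1 y, v x1 y = sInf {c | ∃ x2, (x1, x2, y) ∈ K2 ∧ c = eval (Sum.elim x1 x2) f2})
    (hvmeas : Measurable fun t : (Fin n1 → ℝ) × (Fin p → ℝ) => v t.1 t.2)
    (hρ : ρ = sInf {c | ∃ x1 ∈ K1, c = eval x1 f1 + ∫ y in Y, v x1 y ∂φ})
    (hφY : φ Yᶜ = 0) (hμ1K1 : μ1 K1ᶜ = 0) (hμ2K2 : μ2 K2ᶜ = 0)
    (hmap : Measure.map (fun t => (t.1, t.2.2)) μ2 = μ1.prod φ) :
    ρ ≤ ∫ x1, eval x1 f1 ∂μ1 + ∫ t, eval (Sum.elim t.1 t.2.1) f2 ∂μ2 :=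
  (le_integral_add_integral_valueFunction hK1c hK2c hv hvmeas hρ hφY hμ1K1).trans <|
    add_le_add_right (integral_valueFunction_le hK2c hv hvmeas hμ2K2 hmap) _

end FeasiblePair

theorem gmp_lower_bound_general
    (n1 n2 p : ℕ)
    (f1 : MvPolynomial (Fin n1) ℝ) (f2 : MvPolynomial (Fin n1 ⊕ Fin n2) ℝ)
    (K1 : Set (Fin n1 → ℝ)) (Y : Set (Fin p → ℝ))
    (K2 : Set ((Fin n1 → ℝ) × (Fin n2 → ℝ) × (Fin p → ℝ)))
    (φ : Measure (Fin p → ℝ)) (hφ : IsProbabilityMeasure φ) (hφY : φ Yᶜ = 0)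
    (hK1c : IsCompact K1) (hK2c : IsCompact K2)
    (v : (Fin n1 → ℝ) → (Fin p → ℝ) → ℝ)
    (hv : ∀ x1 y, v x1 y =
      sInf {c | ∃ x2, (x1, x2, y) ∈ K2 ∧ c = eval (Sum.elim x1 x2) f2})
    (hvmeas : Measurable fun t : (Fin n1 → ℝ) × (Fin p → ℝ) => v t.1 t.2)
    (ρ ρ12 : ℝ)
    (hρ : ρ = sInf {c | ∃ x1 ∈ K1, c = eval x1 f1 + ∫ y in Y, v x1 y ∂φ})
    (hρ12 : ρ12 = sInf {c | ∃ (μ1 : Measure (Fin n1 → ℝ))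
        (μ2 : Measure ((Fin n1 → ℝ) × (Fin n2 → ℝ) × (Fin p → ℝ))),
      IsProbabilityMeasure μ1 ∧ IsFiniteMeasure μ2 ∧
      μ1 K1ᶜ = 0 ∧ μ2 K2ᶜ = 0 ∧
      Measure.map (fun t => (t.1, t.2.2)) μ2 = μ1.prod φ ∧
      c = (∫ x1, eval x1 f1 ∂μ1) + ∫ t, eval (Sum.elim t.1 t.2.1) f2 ∂μ2})
    (μ1 : Measure (Fin n1 → ℝ))
    (μ2 : Measure ((Fin n1 → ℝ) × (Fin n2 → ℝ) × (Fin p → ℝ)))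
    (hμ1 : IsProbabilityMeasure μ1) (hμ2 : IsFiniteMeasure μ2)
    (hμ1K1 : μ1 K1ᶜ = 0) (hμ2K2 : μ2 K2ᶜ = 0)
    (hmap : Measure.map (fun t => (t.1, t.2.2)) μ2 = μ1.prod φ) :
    ((∫ x1, eval x1 f1 ∂μ1) + (∫ t, eval (Sum.elim t.1 t.2.1) f2 ∂μ2)
      ≥ (∫ x1, eval x1 f1 ∂μ1) + ∫ t in K1 ×ˢ Y, v t.1 t.2 ∂(μ1.prod φ)) ∧
    ((∫ x1, eval x1 f1 ∂μ1) + (∫ t in K1 ×ˢ Y, v t.1 t.2 ∂(μ1.prod φ)) ≥ ρ) ∧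
    ρ12 ≥ ρ := by
  have hprod : (μ1.prod φ).restrict (K1 ×ˢ Y) = μ1.prod φ := by
    rw [← Measure.prod_restrict, Measure.restrict_eq_self_of_ae_mem (mem_ae_iff.2 hμ1K1),
      Measure.restrict_eq_self_of_ae_mem (mem_ae_iff.2 hφY)]
  rw [hprod]
  refine ⟨add_le_add_right (integral_valueFunction_le hK2c hv hvmeas hμ2K2 hmap) _,
    le_integral_add_integral_valueFunction hK1c hK2c hv hvmeas hρ hφY hμ1K1, ?_⟩
  rw [hρ12]
  refine le_csInf ⟨_, μ1, μ2, hμ1, hμ2, hμ1K1, hμ2K2, hmap, rfl⟩ ?_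
  rintro c ⟨ν1, ν2, hν1, hν2, hν1K1, hν2K2, hνmap, rfl⟩
  exact le_objective_of_feasible hK1c hK2c hv hvmeas hρ hφY hν1K1 hν2K2 hνmap

/-- For every pair `(μ1, μ2)` feasible for the generalized moment problem,
`∫ f1 dμ1 + ∫ f2 dμ2 ≥ ∫ f1 dμ1 + ∫_{K1×Y} v d(μ1 ⊗ φ) ≥ ρ`; consequently `ρ₁₂ ≥ ρ`. -/
theorem gmp_lower_bound
    (n1 n2 p Nq Nh Ng NgY : ℕ) (hn1 : 0 < n1) (hn2 : 0 < n2) (hp : 0 < p)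
    (f1 : MvPolynomial (Fin n1) ℝ) (f2 : MvPolynomial (Fin n1 ⊕ Fin n2) ℝ)
    (q : Fin Nq → MvPolynomial (Fin n1) ℝ)
    (h : Fin Nh → MvPolynomial (Fin n1 ⊕ Fin n2 ⊕ Fin p) ℝ)
    (g : Fin Ng → MvPolynomial (Fin n1 ⊕ Fin n2 ⊕ Fin p) ℝ)
    (gY : Fin NgY → MvPolynomial (Fin p) ℝ)
    (K1 : Set (Fin n1 → ℝ)) (Y : Set (Fin p → ℝ))
    (K2 : Set ((Fin n1 → ℝ) × (Fin n2 → ℝ) × (Fin p → ℝ)))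
    (hK1 : K1 = {x1 | ∀ l, 0 ≤ eval x1 (q l)})
    (hY : Y = {y | ∀ j, 0 ≤ eval y (gY j)})
    (hK2 : K2 = {t | t.1 ∈ K1 ∧ t.2.2 ∈ Y ∧
      (∀ i, eval (Sum.elim t.1 (Sum.elim t.2.1 t.2.2)) (h i) = 0) ∧
      (∀ j, 0 ≤ eval (Sum.elim t.1 (Sum.elim t.2.1 t.2.2)) (g j))})
    (φ : Measure (Fin p → ℝ)) (hφ : IsProbabilityMeasure φ) (hφY : φ Yᶜ = 0)
    (hK1c : IsCompact K1) (hK2c : IsCompact K2) (hYc : IsCompact Y)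
    (hK1ne : K1.Nonempty) (hYne : Y.Nonempty)
    (hfeas : ∀ x1 ∈ K1, ∀ y ∈ Y, ∃ x2, (x1, x2, y) ∈ K2)
    (v : (Fin n1 → ℝ) → (Fin p → ℝ) → ℝ)
    (hv : ∀ x1 y, v x1 y =
      sInf {c | ∃ x2, (x1, x2, y) ∈ K2 ∧ c = eval (Sum.elim x1 x2) f2})
    (hvmeas : Measurable fun t : (Fin n1 → ℝ) × (Fin p → ℝ) => v t.1 t.2)
    (ρ ρ12 : ℝ)
    (hρ : ρ = sInf {c | ∃ x1 ∈ K1, c = eval x1 f1 + ∫ y in Y, v x1 y ∂φ})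
    (hρ12 : ρ12 = sInf {c | ∃ (μ1 : Measure (Fin n1 → ℝ))
        (μ2 : Measure ((Fin n1 → ℝ) × (Fin n2 → ℝ) × (Fin p → ℝ))),
      IsProbabilityMeasure μ1 ∧ IsFiniteMeasure μ2 ∧
      μ1 K1ᶜ = 0 ∧ μ2 K2ᶜ = 0 ∧
      Measure.map (fun t => (t.1, t.2.2)) μ2 = μ1.prod φ ∧
      c = (∫ x1, eval x1 f1 ∂μ1) + ∫ t, eval (Sum.elim t.1 t.2.1) f2 ∂μ2})
    (μ1 : Measure (Fin n1 → ℝ))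
    (μ2 : Measure ((Fin n1 → ℝ) × (Fin n2 → ℝ) × (Fin p → ℝ)))
    (hμ1 : IsProbabilityMeasure μ1) (hμ2 : IsFiniteMeasure μ2)
    (hμ1K1 : μ1 K1ᶜ = 0) (hμ2K2 : μ2 K2ᶜ = 0)
    (hmap : Measure.map (fun t => (t.1, t.2.2)) μ2 = μ1.prod φ) :
    ((∫ x1, eval x1 f1 ∂μ1) + (∫ t, eval (Sum.elim t.1 t.2.1) f2 ∂μ2)
      ≥ (∫ x1, eval x1 f1 ∂μ1) + ∫ t in K1 ×ˢ Y, v t.1 t.2 ∂(μ1.prod φ)) ∧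
    ((∫ x1, eval x1 f1 ∂μ1) + (∫ t in K1 ×ˢ Y, v t.1 t.2 ∂(μ1.prod φ)) ≥ ρ) ∧
    ρ12 ≥ ρ :=
  gmp_lower_bound_general n1 n2 p f1 f2 K1 Y K2 φ hφ hφY hK1c hK2c v hv hvmeas ρ ρ12 hρ hρ12 μ1 μ2
    hμ1 hμ2 hμ1K1 hμ2K2 hmap
end

section
/- Moment characterization of the product-marginal constraint: let μ be a nonnegative finite Borel measure on ℝ^{n1} × ℝ^{n2} × ℝ^p supported in a compact set K2, and let φ be a Borel probability measure on ℝ^p supported in a compact set Y. Then the pushforward of μ under the projection (x1,x2,y) ↦ (x1,y) equals the product of the pushforward of μ under (x1,x2,y) ↦ x1 with φ if and only if for all multi-indices α ∈ ℕ^{n1} and γ ∈ ℕ^{p}, ∫ x1^α y^γ dμ = ( ∫ x1^α dμ ) · ( ∫ y^γ dφ ). -/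
/-!
Both sides of the equivalence compare the finite measures `π_{x1,y} μ` and `(π_{x1} μ) ⊗ φ`
through their mixed moments; by Fubini the moments of the product measure are
`(∫ x1^α dμ) (∫ y^γ dφ)`. Both measures are carried by the compact set
`π_{x1,y}(K2) ∪ π_{x1}(K2) × Y`, and a finite measure on a compact set is determined by its
moments: by Stone–Weierstrass, polynomials are uniformly dense in the continuous functions there,
and integration against a finite measure is continuous for the uniform norm.
-/

open MeasureTheory MvPolynomial

section CompactSpace

variable {Ω : Type*} [TopologicalSpace Ω] [CompactSpace Ω] [MeasurableSpace Ω]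

theorem ContinuousMap.integrable [OpensMeasurableSpace Ω] (f : C(Ω, ℝ)) (κ : Measure Ω)
    [IsFiniteMeasure κ] : Integrable f κ :=
  (BoundedContinuousFunction.mkOfCompact f).integrable κ

theorem ContinuousMap.continuous_integral [OpensMeasurableSpace Ω] (κ : Measure Ω)
    [IsFiniteMeasure κ] : Continuous fun f : C(Ω, ℝ) => ∫ x, f x ∂κ := by
  let L : C(Ω, ℝ) →+ ℝ := AddMonoidHom.mk' (fun f => ∫ x, f x ∂κ) fun f g =>
    integral_add (f.integrable κ) (g.integrable κ)
  exact AddMonoidHomClass.continuous_of_bound L (κ.real Set.univ) fun f => by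
    simpa [L, mul_comm] using (BoundedContinuousFunction.mkOfCompact f).norm_integral_le_mul_norm κ

variable [BorelSpace Ω] [HasOuterApproxClosed Ω] {κ₁ κ₂ : Measure Ω} [IsFiniteMeasure κ₁]
  [IsFiniteMeasure κ₂]

theorem ext_of_forall_mem_subalgebra_integral_eq_of_compactSpace {A : Subalgebra ℝ C(Ω, ℝ)}
    (hA : A.SeparatesPoints) (heq : ∀ f ∈ A, ∫ x, f x ∂κ₁ = ∫ x, f x ∂κ₂) : κ₁ = κ₂ := by
  have hdense : ∀ f, f ∈ closure (A : Set C(Ω, ℝ)) := by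
    simp [← A.topologicalClosure_coe,
      ContinuousMap.subalgebra_topologicalClosure_eq_top_of_separatesPoints A hA]
  have heq_closure : Set.EqOn (fun f : C(Ω, ℝ) => ∫ x, f x ∂κ₁) (fun f => ∫ x, f x ∂κ₂)
      (closure A) :=
    Set.EqOn.closure heq (ContinuousMap.continuous_integral κ₁) (ContinuousMap.continuous_integral κ₂)
  exact ext_of_forall_integral_eq_of_IsFiniteMeasure fun g => heq_closure (hdense g.toContinuousMap)

theorem ext_of_forall_integral_monomial_eq_of_compactSpace {ι : Type*} [Fintype ι]
    {F : ι → C(Ω, ℝ)} (hF : Function.Injective fun x i => F i x)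
    (heq : ∀ d : ι → ℕ, ∫ x, ∏ i, F i x ^ d i ∂κ₁ = ∫ x, ∏ i, F i x ^ d i ∂κ₂) : κ₁ = κ₂ := by
  refine ext_of_forall_mem_subalgebra_integral_eq_of_compactSpace (A := (aeval F).range)
    (fun x y hxy => ?_) fun g hg => ?_
  · obtain ⟨i, hi⟩ := Function.ne_iff.mp (hF.ne hxy)
    exact ⟨F i, ⟨_, ⟨X i, aeval_X F i⟩, rfl⟩, hi⟩
  obtain ⟨P, rfl⟩ := AlgHom.mem_range _ |>.mp hg
  clear hg
  induction P using MvPolynomial.induction_on' with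
  | monomial d c =>
    have hval : ∀ x, aeval F (monomial d c) x = c * ∏ i, F i x ^ d i := fun x => by
      simp [aeval_monomial, Finsupp.prod_fintype]
    simp only [hval, integral_const_mul, heq]
  | add P Q hP hQ =>
    simp only [map_add, ContinuousMap.add_apply]
    rw [integral_add (ContinuousMap.integrable _ _) (ContinuousMap.integrable _ _),
      integral_add (ContinuousMap.integrable _ _) (ContinuousMap.integrable _ _), hP, hQ]

end CompactSpace

theorem Measure.map_comap_subtype_val_of_ae_mem {E : Type*} [MeasurableSpace E] {K : Set E}
    (hK : MeasurableSet K) {ν : Measure E} (h : ∀ᵐ x ∂ν, x ∈ K) :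
    (ν.comap (Subtype.val : K → E)).map Subtype.val = ν := by
  rw [map_comap_subtype_coe hK]
  exact Measure.restrict_eq_self_of_ae_mem h

theorem ext_of_forall_integral_monomial_eq {E ι : Type*} [Fintype ι] [TopologicalSpace E]
    [TopologicalSpace.MetrizableSpace E] [MeasurableSpace E] [BorelSpace E] {f : ι → E → ℝ}
    (hf : ∀ i, Continuous (f i)) (hsep : Function.Injective fun x i => f i x)
    {K : Set E} (hK : IsCompact K) {ν₁ ν₂ : Measure E} [IsFiniteMeasure ν₁] [IsFiniteMeasure ν₂]
    (h₁ : ∀ᵐ x ∂ν₁, x ∈ K) (h₂ : ∀ᵐ x ∂ν₂, x ∈ K)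
    (heq : ∀ d : ι → ℕ, ∫ x, ∏ i, f i x ^ d i ∂ν₁ = ∫ x, ∏ i, f i x ^ d i ∂ν₂) :
    ν₁ = ν₂ := by
  have hKm : MeasurableSet K := hK.measurableSet
  have : CompactSpace K := isCompact_iff_compactSpace.mp hK
  have hintegral : ∀ ν : Measure E, (∀ᵐ x ∂ν, x ∈ K) → ∀ g : E → ℝ,
      ∫ x : K, g x ∂ν.comap Subtype.val = ∫ x, g x ∂ν := fun ν h g => by
    conv_rhs => rw [← Measure.map_comap_subtype_val_of_ae_mem hKm h]
    rw [(MeasurableEmbedding.subtype_coe hKm).integral_map]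
  rw [← Measure.map_comap_subtype_val_of_ae_mem hKm h₁,
    ← Measure.map_comap_subtype_val_of_ae_mem hKm h₂]
  congr 1
  refine ext_of_forall_integral_monomial_eq_of_compactSpace
    (F := fun i => ⟨fun x => f i x, (hf i).comp continuous_subtype_val⟩)
    (hsep.comp Subtype.val_injective) fun d => ?_
  exact (hintegral ν₁ h₁ _).trans ((heq d).trans (hintegral ν₂ h₂ _).symm)
theorem ext_of_forall_integral_mixed_monomial_eq {ι κ : Type*} [Fintype ι] [Fintype κ]
    {K : Set ((ι → ℝ) × (κ → ℝ))} (hK : IsCompact K) {ν₁ ν₂ : Measure ((ι → ℝ) × (κ → ℝ))}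
    [IsFiniteMeasure ν₁] [IsFiniteMeasure ν₂] (h₁ : ∀ᵐ z ∂ν₁, z ∈ K) (h₂ : ∀ᵐ z ∂ν₂, z ∈ K)
    (heq : ∀ (α : ι → ℕ) (γ : κ → ℕ), ∫ z, (∏ i, z.1 i ^ α i) * ∏ j, z.2 j ^ γ j ∂ν₁
      = ∫ z, (∏ i, z.1 i ^ α i) * ∏ j, z.2 j ^ γ j ∂ν₂) :
    ν₁ = ν₂ := by
  refine ext_of_forall_integral_monomial_eq (f := Sum.elim (fun i z => z.1 i) (fun j z => z.2 j))
    ?_ (fun z w hzw => ?_) hK h₁ h₂ fun d => ?_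
  · rintro (i | j) <;> simp only [Sum.elim_inl, Sum.elim_inr] <;> fun_prop
  · exact Prod.ext (funext fun i => congrFun hzw (.inl i)) (funext fun j => congrFun hzw (.inr j))
  · simpa only [Fintype.prod_sum_type, Sum.elim_inl, Sum.elim_inr] using heq _ _

theorem ae_map_mem_image_of_isCompact {α β : Type*} [TopologicalSpace α] [MeasurableSpace α]
    [OpensMeasurableSpace α] [TopologicalSpace β] [T2Space β] [MeasurableSpace β]
    [BorelSpace β] {μ : Measure α} {g : α → β} (hg : Continuous g) {K : Set α}
    (hK : IsCompact K) (h : ∀ᵐ x ∂μ, x ∈ K) : ∀ᵐ y ∂μ.map g, y ∈ g '' K :=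
  (ae_map_iff hg.aemeasurable (hK.image hg).isClosed.measurableSet).mpr <|
    h.mono fun x hx => ⟨x, hx, rfl⟩

theorem ae_prod_mem_prod {α β : Type*} [MeasurableSpace α] [MeasurableSpace β] {μ : Measure α}
    {ν : Measure β} [SFinite ν] {A : Set α} {B : Set β} (hA : ∀ᵐ x ∂μ, x ∈ A)
    (hB : ∀ᵐ y ∂ν, y ∈ B) : ∀ᵐ z ∂μ.prod ν, z ∈ A ×ˢ B :=
  (Measure.quasiMeasurePreserving_fst.ae hA).and (Measure.quasiMeasurePreserving_snd.ae hB)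

theorem product_marginal_iff_moments_general
    (n1 n2 p : ℕ)
    (K2 : Set ((Fin n1 → ℝ) × (Fin n2 → ℝ) × (Fin p → ℝ))) (hK2c : IsCompact K2)
    (Y : Set (Fin p → ℝ)) (hYc : IsCompact Y)
    (μ : Measure ((Fin n1 → ℝ) × (Fin n2 → ℝ) × (Fin p → ℝ)))
    (hμfin : IsFiniteMeasure μ) (hμK2 : μ K2ᶜ = 0)
    (φ : Measure (Fin p → ℝ)) (hφ : IsProbabilityMeasure φ) (hφY : φ Yᶜ = 0) :
    Measure.map (fun t => (t.1, t.2.2)) μ = (Measure.map (fun t => t.1) μ).prod φ ↔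
      ∀ (α : Fin n1 → ℕ) (γ : Fin p → ℕ),
        (∫ t, (∏ i, t.1 i ^ α i) * ∏ i, t.2.2 i ^ γ i ∂μ)
          = (∫ t, ∏ i, t.1 i ^ α i ∂μ) * ∫ y, ∏ i, y i ^ γ i ∂φ := by
  set π : (Fin n1 → ℝ) × (Fin n2 → ℝ) × (Fin p → ℝ) → (Fin n1 → ℝ) × (Fin p → ℝ) :=
    fun t => (t.1, t.2.2)
  have hπ : Continuous π := by fun_prop
  have moments_map : ∀ (α : Fin n1 → ℕ) (γ : Fin p → ℕ),
      ∫ z, (∏ i, z.1 i ^ α i) * ∏ i, z.2 i ^ γ i ∂μ.map π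
        = ∫ t, (∏ i, t.1 i ^ α i) * ∏ i, t.2.2 i ^ γ i ∂μ := fun α γ =>
    integral_map hπ.aemeasurable (by fun_prop : Continuous _).aestronglyMeasurable
  have moments_prod : ∀ (α : Fin n1 → ℕ) (γ : Fin p → ℕ),
      ∫ z, (∏ i, z.1 i ^ α i) * ∏ i, z.2 i ^ γ i ∂(μ.map fun t => t.1).prod φ
        = (∫ t, ∏ i, t.1 i ^ α i ∂μ) * ∫ y, ∏ i, y i ^ γ i ∂φ := fun α γ => by
    rw [integral_prod_mul (fun x : Fin n1 → ℝ => ∏ i, x i ^ α i)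
      (fun y : Fin p → ℝ => ∏ i, y i ^ γ i), integral_map measurable_fst.aemeasurable
      (by fun_prop : Continuous _).aestronglyMeasurable]
  refine ⟨fun h α γ => by rw [← moments_map, h, moments_prod], fun h => ?_⟩
  have hK2 : ∀ᵐ t ∂μ, t ∈ K2 := mem_ae_iff.mpr hμK2
  have supp_map := ae_map_mem_image_of_isCompact hπ hK2c hK2
  have supp_prod := ae_prod_mem_prod (ae_map_mem_image_of_isCompact continuous_fst hK2c hK2)
    (mem_ae_iff.mpr hφY)
  exact ext_of_forall_integral_mixed_monomial_eq
    ((hK2c.image hπ).union ((hK2c.image continuous_fst).prod hYc))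
    (supp_map.mono fun _ => Or.inl) (supp_prod.mono fun _ => Or.inr)
    fun α γ => by rw [moments_map, moments_prod, h]

/-- For a finite nonnegative Borel measure `μ` supported in a compact set
`K2` and a Borel probability measure `φ` supported in a compact set `Y`, the
product-marginal constraint `π_{x1,y} μ = (π_{x1} μ) ⊗ φ` holds if and only if
`∫ x1^α y^γ dμ = (∫ x1^α dμ) (∫ y^γ dφ)` for all multi-indices `α`, `γ`. -/
theorem product_marginal_iff_moments
    (n1 n2 p : ℕ) (hn1 : 0 < n1) (hn2 : 0 < n2) (hp : 0 < p)
    (K2 : Set ((Fin n1 → ℝ) × (Fin n2 → ℝ) × (Fin p → ℝ))) (hK2c : IsCompact K2)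
    (Y : Set (Fin p → ℝ)) (hYc : IsCompact Y)
    (μ : Measure ((Fin n1 → ℝ) × (Fin n2 → ℝ) × (Fin p → ℝ)))
    (hμfin : IsFiniteMeasure μ) (hμK2 : μ K2ᶜ = 0)
    (φ : Measure (Fin p → ℝ)) (hφ : IsProbabilityMeasure φ) (hφY : φ Yᶜ = 0) :
    Measure.map (fun t => (t.1, t.2.2)) μ = (Measure.map (fun t => t.1) μ).prod φ ↔
      ∀ (α : Fin n1 → ℕ) (γ : Fin p → ℕ),
        (∫ t, (∏ i, t.1 i ^ α i) * ∏ i, t.2.2 i ^ γ i ∂μ)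
          = (∫ t, ∏ i, t.1 i ^ α i ∂μ) * ∫ y, ∏ i, y i ^ γ i ∂φ :=
  product_marginal_iff_moments_general n1 n2 p K2 hK2c Y hYc μ hμfin hμK2 φ hφ hφY
end
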